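/- The infinite-horizon safe set Safe(C) := {x : V(x) ≥ 0}, where V(x) = lim_{t→∞} V(x,t) = inf_t V(x,t), is the maximal set S ⊆ C with the property that from every point of S the state can be kept in C for all time, assuming existence of optimal controls: (i) Safe(C) ⊆ C; (ii) from every x ∈ Safe(C) there is a control keeping the trajectory in C forever; and hence (iii) any trajectory leaving Safe(C) must eventually exit C. -/
import Mathlib


/-- The finite-horizon BRT value function `V(x,t) = sup_u min_{s ∈ [0,t]} c(x(s))`. -/
noncomputable def Vval {X U : Type*} (traj : X → U → ℝ → X) (c : X → ℝ)
    (x : X) (t : ℝ) : EReal :=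
  ⨆ u : U, ⨅ s ∈ Set.Icc (0 : ℝ) t, (c (traj x u s) : EReal)

/-- The infinite-horizon value `V(x) = lim_{t→∞} V(x,t) = inf_{t ≥ 0} V(x,t)`
(the limit equals the infimum since `V(x,·)` is nonincreasing). -/
noncomputable def Vinf {X U : Type*} (traj : X → U → ℝ → X) (c : X → ℝ) (x : X) : EReal :=
  ⨅ t ∈ Set.Ici (0 : ℝ), Vval traj c x t

/-- The infinite-horizon safe set `Safe(C) = {x : V(x) ≥ 0}`. -/
noncomputable def SafeSet {X U : Type*} (traj : X → U → ℝ → X) (c : X → ℝ) : Set X :=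
  {x | 0 ≤ Vinf traj c x}

theorem safe_set_maximal_invariant {X U : Type*} [Nonempty U]
    (traj : X → U → ℝ → X) (c : X → ℝ)
    (h0 : ∀ (x : X) (u : U), traj x u 0 = x)
    (hopt : ∀ x : X, 0 ≤ Vinf traj c x →
      ∃ u : U, ∀ t : ℝ, 0 ≤ t → 0 ≤ c (traj x u t)) :
    -- (i) the safe set is contained in the constraint set C = {c ≥ 0}
    SafeSet traj c ⊆ {x | 0 ≤ c x} ∧
    -- (ii) from every point of the safe set, some control keeps the state in C forever
    (∀ x ∈ SafeSet traj c, ∃ u : U, ∀ t : ℝ, 0 ≤ t → 0 ≤ c (traj x u t)) ∧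
    -- (iii) from any state outside the safe set, every control eventually exits C
    (∀ y : X, y ∉ SafeSet traj c → ∀ u : U, ∃ t : ℝ, 0 ≤ t ∧ c (traj y u t) < 0) := by
  refine ⟨?_, ?_, ?_⟩
  · intro x hx
    have h1 : Vinf traj c x ≤ Vval traj c x 0 := by
      exact biInf_le _ (le_refl (0:ℝ))
    have h2 : Vval traj c x 0 ≤ (c x : EReal) := by
      apply iSup_le
      intro u
      have : (0:ℝ) ∈ Set.Icc (0:ℝ) 0 := by simp
      calc (⨅ s ∈ Set.Icc (0:ℝ) 0, (c (traj x u s) : EReal))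
          ≤ (c (traj x u 0) : EReal) := biInf_le _ this
        _ = (c x : EReal) := by rw [h0]
    have : (0 : EReal) ≤ (c x : EReal) := le_trans hx (le_trans h1 h2)
    exact_mod_cast this
  · intro x hx
    exact hopt x hx
  · intro y hy u
    by_contra h
    push_neg at h
    apply hy
    show (0 : EReal) ≤ Vinf traj c y
    refine le_iInf fun t => le_iInf fun ht => ?_
    refine le_trans ?_ (le_iSup _ u)
    refine le_iInf fun s => le_iInf fun hs => ?_
    have := h s hs.1
    exact_mod_cast this
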